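/- arXiv:2306.06216 — 7 statements merged into one kernel-verified Lean document; each statement's English description precedes it below -/
import Mathlib

section
/- Let K be a coloured (m+2)-clique and let v be a vertex of K. Then the map sending each of the other m+1 vertices w to the colour c_{vw} is injective, hence a bijection onto {0,1,…,m}; in particular, for every colour c ∈ {0,…,m} there is a unique vertex w ≠ v with c_{vw} = c, and in particular a unique arrow of colour 0 leaving v. -/
namespace MutClassAn

open Finset

variable {V : Type} [Fintype V] [DecidableEq V]

/-- `M i j c` is the number of arrows from `i` to `j` of colour `c`.
An `m`-coloured quiver has no loops, is monochromatic and skew-symmetric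
(`c.rev = m - c` in `Fin (m+1)`). -/
def IsColouredQuiver {m : ℕ} (M : V → V → Fin (m + 1) → ℕ) : Prop :=
  (∀ i c, M i i c = 0) ∧
  (∀ i j c c', M i j c ≠ 0 → M i j c' ≠ 0 → c = c') ∧
  (∀ i j c, M i j c = M j i c.rev)

/-- A coloured quiver is simple if there is at most one arrow between any two
vertices in each direction. -/
def IsSimpleCQ {m : ℕ} (M : V → V → Fin (m + 1) → ℕ) : Prop :=
  ∀ i j : V, (∑ c, M i j c) ≤ 1

/-- Adjacency in the underlying graph. -/
def CQAdj {m : ℕ} (M : V → V → Fin (m + 1) → ℕ) (i j : V) : Prop :=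
  i ≠ j ∧ ∃ c, M i j c ≠ 0

/-- The colour of the (unique, for simple quivers) arrow from `i` to `j`. -/
def colourOf {m : ℕ} (M : V → V → Fin (m + 1) → ℕ) (i j : V) : ℕ :=
  ∑ c : Fin (m + 1), M i j c * c.val

/-- Buan–Thomas coloured quiver mutation at the vertex `j`. -/
def mutate {m : ℕ} (M : V → V → Fin (m + 1) → ℕ) (j : V) :
    V → V → Fin (m + 1) → ℕ := fun i k c =>
  if k = j then M i k (c + 1)
  else if i = j then M i k (c - 1)
  else ((M i k c : ℤ) - ∑ t ∈ Finset.univ.filter (fun t => t ≠ c), (M i k t : ℤ)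
      + ((M i j c : ℤ) - (M i j (c - 1) : ℤ)) * (M j k 0 : ℤ)
      + (M i j (Fin.last m) : ℤ) * ((M j k c : ℤ) - (M j k (c + 1) : ℤ))).toNat

/-- Mutation equivalence: the equivalence relation generated by single mutations. -/
def MutEquiv {m : ℕ} (M M' : V → V → Fin (m + 1) → ℕ) : Prop :=
  Relation.EqvGen (fun A B => ∃ v, mutate A v = B) M M'

/-- A hole is an induced cycle of length at least `4` in the underlying graph. -/
def HasHole {m : ℕ} (M : V → V → Fin (m + 1) → ℕ) : Prop :=
  ∃ k : ℕ, 4 ≤ k ∧ ∃ x : ZMod k → V, Function.Injective x ∧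
    (∀ i, CQAdj M (x i) (x (i + 1))) ∧
    ∀ i j : ZMod k, i ≠ j → j ≠ i + 1 → i ≠ j + 1 → ¬ CQAdj M (x i) (x j)

/-- A clique: a set of pairwise adjacent vertices. -/
def IsCliqueCQ {m : ℕ} (M : V → V → Fin (m + 1) → ℕ) (S : Set V) : Prop :=
  S.Pairwise (CQAdj M)

/-- The set of neighbours of a vertex. -/
def nbrs {m : ℕ} (M : V → V → Fin (m + 1) → ℕ) (v : V) : Set V :=
  {u | CQAdj M v u}

/-- Connectedness of the underlying graph. -/
def CQConnected {m : ℕ} (M : V → V → Fin (m + 1) → ℕ) : Prop :=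
  ∀ u w : V, Relation.ReflTransGen (CQAdj M) u w

/-- Condition (1) of the class `𝒬ₙᵐ`: the neighbourhood of every vertex is covered
by two cliques of sizes `r, k ≤ m + 2` with `r + k = z + 2`, with no arrows between
the two cliques away from the vertex. -/
def Cond1 {m : ℕ} (M : V → V → Fin (m + 1) → ℕ) : Prop :=
  ∀ v : V, (nbrs M v).Nonempty →
    ∃ R K : Finset V, v ∈ R ∧ v ∈ K ∧ IsCliqueCQ M ↑R ∧ IsCliqueCQ M ↑K ∧
      R.card + K.card = (nbrs M v).ncard + 2 ∧ R.card ≤ m + 2 ∧ K.card ≤ m + 2 ∧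
      (∀ u ∈ nbrs M v, u ∈ R ∨ u ∈ K) ∧
      ∀ a ∈ R, a ≠ v → ∀ b ∈ K, b ≠ v → ¬ CQAdj M a b

/-- Condition (2) of the class `𝒬ₙᵐ`: every triangle inside a clique has colour
sum `m - 1` along one of its two orientations (sums taken in `ℤ`). -/
def Cond2 {m : ℕ} (M : V → V → Fin (m + 1) → ℕ) : Prop :=
  ∀ v1 v2 v3 : V, v1 ≠ v2 → v2 ≠ v3 → v1 ≠ v3 →
    CQAdj M v1 v2 → CQAdj M v2 v3 → CQAdj M v1 v3 →
    ((colourOf M v2 v1 : ℤ) + (colourOf M v1 v3 : ℤ) + (colourOf M v3 v2 : ℤ)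
        = (m : ℤ) - 1 ∨
      ((m : ℤ) - colourOf M v2 v1) + ((m : ℤ) - colourOf M v1 v3)
          + ((m : ℤ) - colourOf M v3 v2) = (m : ℤ) - 1)

/-- Membership in the class `𝒬ₙᵐ` (`n` being the cardinality of the vertex set). -/
def MemQClass {m : ℕ} (M : V → V → Fin (m + 1) → ℕ) : Prop :=
  IsColouredQuiver M ∧ IsSimpleCQ M ∧ CQConnected M ∧ ¬ HasHole M ∧ Cond1 M ∧ Cond2 M

/-- An `Aₙ`-quiver: the underlying graph is the path graph on the vertex set. -/
def IsAnQuiver {m : ℕ} (M : V → V → Fin (m + 1) → ℕ) : Prop :=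
  ∃ e : Fin (Fintype.card V) ≃ V,
    ∀ i j : Fin (Fintype.card V),
      CQAdj M (e i) (e j) ↔ (i.val + 1 = j.val ∨ j.val + 1 = i.val)

/-- The coloured quiver on `Fin n` whose underlying graph is the path
`0 — 1 — ⋯ — (n-1)`, with the arrow `j+1 → j` coloured `c j` and the arrow
`j → j+1` coloured `m - c j`. -/
def pathQuiver (m n : ℕ) (c : ℕ → Fin (m + 1)) :
    Fin n → Fin n → Fin (m + 1) → ℕ := fun i j d =>
  if j.val + 1 = i.val ∧ d = c j.val then 1
  else if i.val + 1 = j.val ∧ d = (c i.val).rev then 1 else 0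

/-- Delete all arrows between vertices of `S`. -/
def deleteArrows {m : ℕ} (M : V → V → Fin (m + 1) → ℕ) (S : Finset V) :
    V → V → Fin (m + 1) → ℕ := fun i j c =>
  if i ∈ S ∧ j ∈ S then 0 else M i j c

/-- The connected component of `u` is an `A_k`-quiver (a path) for some `k ≥ 1`. -/
def ComponentIsPath {m : ℕ} (M : V → V → Fin (m + 1) → ℕ) (u : V) : Prop :=
  ∃ (k : ℕ) (x : Fin k → V), 1 ≤ k ∧ Function.Injective x ∧
    Set.range x = {w | Relation.ReflTransGen (CQAdj M) u w} ∧
    ∀ i j : Fin k, CQAdj M (x i) (x j) ↔ (i.val + 1 = j.val ∨ j.val + 1 = i.val)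

/-- An almost extremal clique: deleting its arrows leaves a connected component
which is an `A_k`-quiver for some `k ≥ 1`. -/
def AlmostExtremalClique {m : ℕ} (M : V → V → Fin (m + 1) → ℕ) (S : Finset V) : Prop :=
  IsCliqueCQ M ↑S ∧ ∃ u : V, ComponentIsPath (deleteArrows M S) u

/-- An extremal clique: deleting its arrows leaves a single-vertex component. -/
def ExtremalClique {m : ℕ} (M : V → V → Fin (m + 1) → ℕ) (S : Finset V) : Prop :=
  IsCliqueCQ M ↑S ∧
    ∃ u : V, {w | Relation.ReflTransGen (CQAdj (deleteArrows M S)) u w} = {u}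

/-- A coloured clique structure on a vertex type: colours `c i j ∈ {0,…,m}` with
skew-symmetry `c j i = m - c i j` and the triangle condition. -/
def IsCliqueColouring (m : ℕ) {W : Type} (c : W → W → ℕ) : Prop :=
  (∀ i j : W, i ≠ j → c i j ≤ m) ∧
  (∀ i j : W, i ≠ j → c i j + c j i = m) ∧
  ∀ i j l : W, i ≠ j → j ≠ l → i ≠ l →
    ((c i j : ℤ) + (c j l : ℤ) + (c l i : ℤ) = (m : ℤ) - 1 ∨
      (c i j : ℤ) + (c j l : ℤ) + (c l i : ℤ) = 2 * (m : ℤ) + 1)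

/-- Cyclic successor in `Fin k`. -/
def cyc {k : ℕ} (i : Fin k) : Fin k :=
  ⟨(i.val + 1) % k, Nat.mod_lt _ i.pos⟩

/-- The weight of the Hamiltonian cycle `x 0 → x 1 → ⋯ → x (k-1) → x 0`:
the sum of the colours of its arrows. -/
def cycleWeight {W : Type} (c : W → W → ℕ) {k : ℕ} (x : Fin k → W) : ℤ :=
  ∑ i : Fin k, (c (x i) (x (cyc i)) : ℤ)

/-- The Hamiltonian cycle on `k+1` vertices obtained from the cycle
`x 0 → ⋯ → x (k-1) → x 0` by inserting the vertex `x (Fin.last k)`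
immediately after `x j`. -/
def insertAfter {W : Type} {k : ℕ} (x : Fin (k + 1) → W) (j : Fin k) :
    Fin (k + 1) → W := fun i =>
  if i = 0 then x (Fin.last k)
  else x (Fin.castSucc ⟨(j.val + i.val) % k, Nat.mod_lt _ j.pos⟩)

namespace IsCliqueColouring

variable {m : ℕ} {W : Type} {c : W → W → ℕ}

/-- If `c v w = c v w'`, skew-symmetry gives the triangle `v → w → w' → v` the weight
`m + c w w'`, which lies strictly between `m - 1` and `2m + 1`. -/
theorem eq_of_colour_eq (hc : IsCliqueColouring m c) {v w w' : W} (hw : w ≠ v) (hw' : w' ≠ v)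
    (h : c v w = c v w') : w = w' := by
  obtain ⟨hle, hskew, htri⟩ := hc
  by_contra hne
  have := hskew v w' hw'.symm
  have := hle w w' hne
  rcases htri v w w' hw.symm hne hw'.symm with t | t <;> omega

def outColour (hc : IsCliqueColouring m c) (v : W) : {w // w ≠ v} → Fin (m + 1) :=
  fun w => ⟨c v w, Nat.lt_succ_of_le (hc.1 v w w.2.symm)⟩

theorem outColour_injective (hc : IsCliqueColouring m c) (v : W) :
    Function.Injective (hc.outColour v) :=
  fun a b h => Subtype.ext (hc.eq_of_colour_eq a.2 b.2 (Fin.val_eq_of_eq h))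

theorem outColour_bijective [Fintype W] (hc : IsCliqueColouring m c) (v : W)
    (hcard : Fintype.card W = m + 2) : Function.Bijective (hc.outColour v) := by
  classical
  refine (Fintype.bijective_iff_injective_and_card _).2 ⟨hc.outColour_injective v, ?_⟩
  simp [Fintype.card_subtype_compl, hcard]

end IsCliqueColouring

theorem colours_leaving_vertex_bijective_general (m : ℕ)
    (W : Type) [Fintype W] (hcard : Fintype.card W = m + 2)
    (c : W → W → ℕ) (hc : IsCliqueColouring m c) (v : W) :
    (∀ w w' : W, w ≠ v → w' ≠ v → c v w = c v w' → w = w') ∧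
    (∀ col : ℕ, col ≤ m → ∃! w : W, w ≠ v ∧ c v w = col) := by
  refine ⟨fun w w' hw hw' => hc.eq_of_colour_eq hw hw', fun col hcol => ?_⟩
  obtain ⟨w, hw⟩ := (hc.outColour_bijective v hcard).2 ⟨col, Nat.lt_succ_of_le hcol⟩
  have hcol_w : c v w = col := congrArg Fin.val hw
  exact ⟨w, ⟨w.2, hcol_w⟩, fun w' ⟨hw', h⟩ => hc.eq_of_colour_eq hw' w.2 (h.trans hcol_w.symm)⟩

/-- In a coloured `(m+2)`-clique, the colours of the arrows leaving a fixed vertex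
`v` are pairwise distinct, and every colour in `{0,…,m}` occurs exactly once;
in particular there is a unique arrow of colour `0` leaving `v`. -/
theorem colours_leaving_vertex_bijective (m : ℕ) (hm : 1 ≤ m)
    (W : Type) [Fintype W] [DecidableEq W] (hcard : Fintype.card W = m + 2)
    (c : W → W → ℕ) (hc : IsCliqueColouring m c) (v : W) :
    (∀ w w' : W, w ≠ v → w' ≠ v → c v w = c v w' → w = w') ∧
    (∀ col : ℕ, col ≤ m → ∃! w : W, w ≠ v ∧ c v w = col) :=
  colours_leaving_vertex_bijective_general m W hcard c hc v

end MutClassAn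
end

section
/- Let K be a coloured (m+2)-clique with vertices w_0, …, w_{m+1}. Then there exists a permutation θ of {0,…,m+1} such that the (m+2)-cycle w_{θ(0)} → w_{θ(1)} → ⋯ → w_{θ(m+1)} → w_{θ(0)} has all its arrows coloured 0, i.e. c_{w_{θ(i)} w_{θ(i+1)}} = 0 for all i (indices modulo m+2). -/
namespace MutClassAn

open Finset

variable {V : Type} [Fintype V] [DecidableEq V]

/-! Modulo `m + 2` the triangle condition says that `d i j = c i j + 1` is a cocycle on the
complete graph, and skew-symmetry says that `d` is alternating; so `d` is a coboundary
`d i j = φ j - φ i` with `φ : W → ℤ/(m+2)`. Since `1 ≤ d i j ≤ m + 1`, the potential `φ` is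
injective, hence a bijection onto `ℤ/(m+2)`, and following the vertices in the order
`φ⁻¹ 0, φ⁻¹ 1, …` every arrow has `d = 1`, i.e. colour `0`. -/

open scoped Fin.CommRing

section Coboundary

variable {G W : Type*} [AddCommGroup G] [DecidableEq W]

def potentialFrom (d : W → W → G) (b : W) (i : W) : G :=
  if i = b then 0 else d b i

variable {d : W → W → G}

theorem eq_potentialFrom_sub (hskew : ∀ i j, i ≠ j → d i j + d j i = 0)
    (hcocycle : ∀ i j l, i ≠ j → j ≠ l → i ≠ l → d i j + d j l + d l i = 0)
    (b : W) {i j : W} (hij : i ≠ j) :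
    d i j = potentialFrom d b j - potentialFrom d b i := by
  unfold potentialFrom
  by_cases hi : i = b
  · subst hi
    simp [hij.symm]
  by_cases hj : j = b
  · subst hj
    simpa [hi, eq_neg_iff_add_eq_zero] using hskew i j hij
  simp only [if_neg hi, if_neg hj]
  linear_combination (norm := abel) hcocycle i j b hij hj hi - hskew b j (Ne.symm hj)

theorem potentialFrom_injective (hskew : ∀ i j, i ≠ j → d i j + d j i = 0)
    (hcocycle : ∀ i j l, i ≠ j → j ≠ l → i ≠ l → d i j + d j l + d l i = 0)
    (hne : ∀ i j, i ≠ j → d i j ≠ 0) (b : W) :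
    Function.Injective (potentialFrom d b) := by
  intro i j hφ
  by_contra hij
  exact hne i j hij (by rw [eq_potentialFrom_sub hskew hcocycle b hij, hφ, sub_self])

end Coboundary

namespace IsCliqueColouring

variable {m : ℕ} {W : Type} {c : W → W → ℕ}

theorem cast_add_one_skew (hc : IsCliqueColouring m c) (i j : W) (hij : i ≠ j) :
    ((c i j : Fin (m + 2)) + 1) + ((c j i : Fin (m + 2)) + 1) = 0 := by
  have h := congrArg (Nat.cast : ℕ → Fin (m + 2)) (hc.2.1 i j hij)
  have hzero := Fin.natCast_self (m + 2)
  push_cast at h hzero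
  linear_combination h + hzero

theorem cast_add_one_cocycle (hc : IsCliqueColouring m c) (i j l : W)
    (hij : i ≠ j) (hjl : j ≠ l) (hil : i ≠ l) :
    ((c i j : Fin (m + 2)) + 1) + ((c j l : Fin (m + 2)) + 1) + ((c l i : Fin (m + 2)) + 1)
      = 0 := by
  have hzero := Fin.natCast_self (m + 2)
  push_cast at hzero
  -- both admissible sums, `m - 1` and `2m + 1`, are `-3` modulo `m + 2`
  rcases hc.2.2 i j l hij hjl hil with h | h <;>
    have h := congrArg (Int.cast : ℤ → Fin (m + 2)) h <;> push_cast at h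
  · linear_combination h + hzero
  · linear_combination h + 2 * hzero

theorem cast_add_one_ne_zero (hc : IsCliqueColouring m c) (i j : W) (hij : i ≠ j) :
    (c i j : Fin (m + 2)) + 1 ≠ 0 := by
  have hlt : c i j + 1 < m + 2 := by have := hc.1 i j hij; omega
  exact_mod_cast mt Fin.natCast_eq_zero.1 (Nat.not_dvd_of_pos_of_lt (Nat.succ_pos _) hlt)

theorem eq_zero_of_cast_eq_zero (hc : IsCliqueColouring m c) {i j : W} (hij : i ≠ j)
    (h : (c i j : Fin (m + 2)) = 0) : c i j = 0 :=
  Nat.eq_zero_of_dvd_of_lt (Fin.natCast_eq_zero.1 h) (by have := hc.1 i j hij; omega)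

end IsCliqueColouring

theorem exists_zero_coloured_cycle_general (m : ℕ)
    (W : Type) [DecidableEq W]
    (c : W → W → ℕ) (hc : IsCliqueColouring m c) (w : Fin (m + 2) ≃ W) :
    ∃ θ : Equiv.Perm (Fin (m + 2)),
      ∀ i : Fin (m + 2), c (w (θ i)) (w (θ (i + 1))) = 0 := by
  let φ := potentialFrom (fun i j ↦ (c i j : Fin (m + 2)) + 1) (w 0)
  have hφ : Function.Injective (φ ∘ w) :=
    (potentialFrom_injective hc.cast_add_one_skew hc.cast_add_one_cocycle
      hc.cast_add_one_ne_zero (w 0)).comp w.injective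
  let σ := Equiv.ofBijective (φ ∘ w) (Finite.injective_iff_bijective.1 hφ)
  have hσ (k : Fin (m + 2)) : φ (w (σ.symm k)) = k := σ.apply_symm_apply k
  refine ⟨σ.symm, fun i ↦ ?_⟩
  have hne : w (σ.symm i) ≠ w (σ.symm (i + 1)) := by simp
  apply hc.eq_zero_of_cast_eq_zero hne
  have h := eq_potentialFrom_sub hc.cast_add_one_skew hc.cast_add_one_cocycle (w 0) hne
  change _ = φ _ - φ _ at h
  rw [hσ, hσ] at h
  linear_combination h

/-- In a coloured `(m+2)`-clique with vertices `w 0, …, w (m+1)` there is a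
permutation `θ` such that the `(m+2)`-cycle
`w (θ 0) → w (θ 1) → ⋯ → w (θ (m+1)) → w (θ 0)` has all its arrows coloured `0`. -/
theorem exists_zero_coloured_cycle (m : ℕ) (hm : 1 ≤ m)
    (W : Type) [Fintype W] [DecidableEq W] (hcard : Fintype.card W = m + 2)
    (c : W → W → ℕ) (hc : IsCliqueColouring m c) (w : Fin (m + 2) ≃ W) :
    ∃ θ : Equiv.Perm (Fin (m + 2)),
      ∀ i : Fin (m + 2), c (w (θ i)) (w (θ (i + 1))) = 0 :=
  exists_zero_coloured_cycle_general m W c hc w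

end MutClassAn
end

section
/- Coloured quiver mutation restricted to the class Q_n^m is invertible; more precisely, if Q ∈ Q_n^m and v is any vertex of Q, then μ_v^{m+1}(Q) = Q, i.e. applying the coloured mutation at v exactly m+1 times returns the original quiver. -/
namespace MutClassAn

open Finset

variable {V : Type} [Fintype V] [DecidableEq V]

/-!
Mutating at `v` only rotates the colours of the arrows at `v`: after `t` steps the arrow
`i → v` of colour `a` has colour `a - t` and the arrow `v → k` of colour `b` has colour `b + t`.
For `i, k ≠ v` the arrows `i → k` keep their (single) colour except at the step where the arrow
into `v` has colour `m`, i.e. `t = a + 1`, and the one where the arrow out of `v` has colour `0`,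
i.e. `t = -b`. There the correction terms are `±(δ_{a+b+1} - δ_{a+b})` with opposite signs, and
for a simple quiver the two changes undo each other in either order. Each occurs exactly once
among `m + 1` consecutive steps.
-/

section MutationStep

variable {m : ℕ}

def mutationStep (N : Fin (m + 1) → ℕ) (d : Fin (m + 1) → ℤ) : Fin (m + 1) → ℕ :=
  fun c => ((N c : ℤ) - ∑ t ∈ univ.filter (fun t => t ≠ c), (N t : ℤ) + d c).toNat

lemma mutationStep_apply (N : Fin (m + 1) → ℕ) (d : Fin (m + 1) → ℤ) (c : Fin (m + 1)) :
    mutationStep N d c = (2 * (N c : ℤ) - ∑ t, (N t : ℤ) + d c).toNat := by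
  rw [mutationStep, filter_ne', sum_erase_eq_sub (mem_univ c)]
  ring_nf

lemma mutationStep_single_apply (e : Fin (m + 1)) (k : ℕ) (d : Fin (m + 1) → ℤ)
    (c : Fin (m + 1)) :
    mutationStep (Pi.single e k) d c = (2 * (if c = e then (k : ℤ) else 0) - k + d c).toNat := by
  simp [mutationStep_apply, Pi.single_apply, apply_ite (Nat.cast : ℕ → ℤ)]

lemma mutationStep_single_zero (e : Fin (m + 1)) (k : ℕ) :
    mutationStep (Pi.single e k) 0 = Pi.single e k := by
  funext c
  rw [mutationStep_single_apply]
  rcases eq_or_ne c e with rfl | hc <;> simp [*]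
  omega

lemma eq_zero_or_single_of_sum_le_one {N : Fin (m + 1) → ℕ} (hN : ∑ c, N c ≤ 1) :
    N = 0 ∨ ∃ e, N = Pi.single e 1 := by
  refine or_iff_not_imp_left.mpr fun h => ?_
  obtain ⟨e, he⟩ := Function.ne_iff.mp h
  rw [← add_sum_erase _ _ (mem_univ e)] at hN
  have hrest := sum_eq_zero_iff.mp (show ∑ c ∈ univ.erase e, N c = 0 by simp at he; omega)
  refine ⟨e, funext fun c => ?_⟩
  rcases eq_or_ne c e with rfl | hc
  · simp at he ⊢; omega
  · simp [hc, hrest c (mem_erase.mpr ⟨hc, mem_univ c⟩)]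

lemma exists_eq_single_of_sum_le_one {N : Fin (m + 1) → ℕ} (hN : ∑ c, N c ≤ 1) :
    ∃ e k, N = Pi.single e k := by
  rcases eq_zero_or_single_of_sum_le_one hN with h | ⟨e, h⟩
  exacts [⟨0, 0, h.trans (Pi.single_zero 0).symm⟩, ⟨e, 1, h⟩]

lemma mutationStep_mutationStep_single_sub_single {N : Fin (m + 1) → ℕ} (hN : ∑ c, N c ≤ 1)
    (p q : Fin (m + 1)) :
    (∃ e k, mutationStep N (Pi.single p 1 - Pi.single q 1) = Pi.single e k) ∧
      mutationStep (mutationStep N (Pi.single p 1 - Pi.single q 1))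
        (Pi.single q 1 - Pi.single p 1) = N := by
  rcases eq_or_ne p q with rfl | hpq
  · obtain ⟨e, k, rfl⟩ := exists_eq_single_of_sum_le_one hN
    simp only [sub_self, mutationStep_single_zero, and_true]
    exact ⟨e, k, rfl⟩
  suffices ∃ e k, mutationStep N (Pi.single p 1 - Pi.single q 1) = Pi.single e k ∧
      mutationStep (Pi.single e k) (Pi.single q 1 - Pi.single p 1) = N by
    obtain ⟨e, k, h₁, h₂⟩ := this
    exact ⟨⟨e, k, h₁⟩, h₁ ▸ h₂⟩
  rcases eq_zero_or_single_of_sum_le_one hN with rfl | ⟨e, rfl⟩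
  · refine ⟨p, 1, ?_, ?_⟩ <;> funext c
    · simp [mutationStep_apply, Pi.single_apply]; split_ifs <;> simp_all
    · rw [mutationStep_single_apply]; simp [Pi.single_apply]; split_ifs <;> simp_all
  by_cases hep : e = p
  · subst hep
    refine ⟨e, 2, ?_, ?_⟩ <;> funext c <;> rw [mutationStep_single_apply] <;>
      simp [Pi.single_apply] <;> split_ifs <;> simp_all
  by_cases heq : e = q
  · subst heq
    refine ⟨e, 0, ?_, ?_⟩ <;> funext c <;> rw [mutationStep_single_apply] <;>
      simp [Pi.single_apply] <;> split_ifs <;> simp_all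
  refine ⟨e, 1, ?_, ?_⟩ <;> funext c <;> rw [mutationStep_single_apply] <;>
    simp [Pi.single_apply] <;> split_ifs <;> simp_all

end MutationStep

section Orbit

variable {m : ℕ} {N : ℕ → Fin (m + 1) → ℕ} {corr : ℕ → Fin (m + 1) → ℤ}

lemma orbit_eq_of_corr_eq_zero (hstep : ∀ t, N (t + 1) = mutationStep (N t) (corr t))
    {a b : ℕ} (hab : a ≤ b) (hzero : ∀ t, a ≤ t → t < b → corr t = 0)
    (hsingle : ∃ e k, N a = Pi.single e k) : N b = N a := by
  obtain ⟨e, k, hNa⟩ := hsingle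
  induction b, hab using Nat.le_induction with
  | base => rfl
  | succ b hab ih =>
    rw [hstep, ih fun t h₁ h₂ => hzero t h₁ (by omega), hzero b hab (by omega), hNa,
      mutationStep_single_zero]

lemma orbit_eq_of_corr_cancel (hstep : ∀ t, N (t + 1) = mutationStep (N t) (corr t))
    (hN : ∑ c, N 0 c ≤ 1) {p q : Fin (m + 1)} {u w n : ℕ} (hu : u < n) (hw : w < n)
    (hcorr : ∀ t < n, corr t = (if t = u then Pi.single p 1 - Pi.single q 1 else 0) +
      (if t = w then Pi.single q 1 - Pi.single p 1 else 0)) :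
    N n = N 0 := by
  have hsingle₀ := exists_eq_single_of_sum_le_one hN
  wlog huw : u < w generalizing p q u w
  · rcases (not_lt.mp huw).eq_or_lt with rfl | hwu
    · refine orbit_eq_of_corr_eq_zero hstep n.zero_le (fun t _ ht => ?_) hsingle₀
      rw [hcorr t ht]
      split_ifs <;> abel
    · exact this hw hu (fun t ht => (hcorr t ht).trans (add_comm _ _)) hwu
  obtain ⟨hmid, hback⟩ := mutationStep_mutationStep_single_sub_single hN p q
  have hNu : N u = N 0 := orbit_eq_of_corr_eq_zero hstep u.zero_le
    (fun t _ ht => by rw [hcorr t (by omega), if_neg (by omega), if_neg (by omega), add_zero])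
    hsingle₀
  have hNu' : N (u + 1) = mutationStep (N 0) (Pi.single p 1 - Pi.single q 1) := by
    rw [hstep, hNu, hcorr u hu, if_pos rfl, if_neg huw.ne, add_zero]
  have hNw : N w = N (u + 1) := orbit_eq_of_corr_eq_zero hstep huw
    (fun t ht ht' => by rw [hcorr t (by omega), if_neg (by omega), if_neg (by omega), add_zero])
    (hNu' ▸ hmid)
  have hNw' : N (w + 1) = N 0 := by
    rw [hstep, hNw, hNu', hcorr w hw, if_neg huw.ne', if_pos rfl, zero_add, hback]
  rw [← hNw']
  exact orbit_eq_of_corr_eq_zero hstep hw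
    (fun t ht ht' => by rw [hcorr t ht', if_neg (by omega), if_neg (by omega), add_zero])
    (hNw' ▸ hsingle₀)

end Orbit

end MutClassAn

namespace MutClassAn

variable {V : Type} [DecidableEq V] {m : ℕ}

open scoped Fin.NatCast

lemma natCast_eq_iff_of_lt {n t : ℕ} [NeZero n] (ht : t < n) (x : Fin n) :
    (t : Fin n) = x ↔ t = x.val := by
  rw [Fin.ext_iff, Fin.val_cast_of_lt ht]

def mutationCorrection (A B : Fin (m + 1) → ℕ) : Fin (m + 1) → ℤ := fun c =>
  ((A c : ℤ) - A (c - 1)) * B 0 + A (Fin.last m) * ((B c : ℤ) - B (c + 1))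

lemma mutationCorrection_zero_left (B : Fin (m + 1) → ℕ) : mutationCorrection 0 B = 0 := by
  funext c; simp [mutationCorrection]

lemma mutationCorrection_zero_right (A : Fin (m + 1) → ℕ) : mutationCorrection A 0 = 0 := by
  funext c; simp [mutationCorrection]

lemma mutationCorrection_single (a b : Fin (m + 1)) :
    mutationCorrection (Pi.single a 1) (Pi.single b 1) =
      (if b = 0 then Pi.single a 1 - Pi.single (a + 1) 1 else 0) +
      (if a = Fin.last m then Pi.single b 1 - Pi.single (b - 1) 1 else 0) := by
  funext c
  have h₁ : c - 1 = a ↔ c = a + 1 := sub_eq_iff_eq_add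
  have h₂ : c + 1 = b ↔ c = b - 1 := eq_sub_iff_add_eq.symm
  simp only [mutationCorrection, Pi.single_apply, Pi.add_apply, h₁, h₂,
    @eq_comm _ 0 b, @eq_comm _ (Fin.last m) a]
  by_cases hb : b = 0 <;> by_cases ha : a = Fin.last m <;> simp [hb, ha, Pi.single_apply]

lemma single_comp_add_right {G β : Type*} [AddGroup G] [DecidableEq G] [Zero β] (a τ : G)
    (x : β) : (fun c => (Pi.single a x : G → β) (c + τ)) = Pi.single (a - τ) x := by
  funext c; simp [Pi.single_apply, eq_sub_iff_add_eq]

lemma mutationCorrection_shift_single (a b τ : Fin (m + 1)) :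
    mutationCorrection (fun c => (Pi.single a 1 : Fin (m + 1) → ℕ) (c + τ))
      (fun c => (Pi.single b 1 : Fin (m + 1) → ℕ) (c - τ)) =
      (if τ = -b then Pi.single (a + b) 1 - Pi.single (a + b + 1) 1 else 0) +
      (if τ = a + 1 then Pi.single (a + b + 1) 1 - Pi.single (a + b) 1 else 0) := by
  have hb : (fun c => (Pi.single b 1 : Fin (m + 1) → ℕ) (c - τ)) = Pi.single (b + τ) 1 := by
    simpa [← sub_eq_add_neg] using single_comp_add_right b (-τ) 1
  have hlast : Fin.last m = -1 := eq_neg_of_add_eq_zero_left (Fin.last_add_one m)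
  rw [single_comp_add_right, hb, mutationCorrection_single, hlast]
  congr 1
  · rcases eq_or_ne τ (-b) with rfl | h
    · simp [sub_neg_eq_add]
    · rw [if_neg fun h' => h (eq_neg_of_add_eq_zero_right h'), if_neg h]
  · rcases eq_or_ne τ (a + 1) with rfl | h
    · simp only [sub_add_cancel_left, if_true]
      rw [show b + (a + 1) = a + b + 1 by abel, add_sub_cancel_right]
    · rw [if_neg fun h' => h (by rw [← sub_neg_eq_add, ← h', sub_sub_cancel]), if_neg h]

lemma mutate_apply_of_ne (Q : V → V → Fin (m + 1) → ℕ) {v i k : V} (hi : i ≠ v)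
    (hk : k ≠ v) : mutate Q v i k = mutationStep (Q i k) (mutationCorrection (Q i v) (Q v k)) := by
  funext c
  simp only [mutate, if_neg hk, if_neg hi, mutationStep, mutationCorrection, add_assoc]

lemma iterate_mutate_apply_to_vertex (Q : V → V → Fin (m + 1) → ℕ) (v i : V) (t : ℕ)
    (c : Fin (m + 1)) : ((fun A => mutate A v)^[t] Q) i v c = Q i v (c + t) := by
  induction t generalizing c with
  | zero => simp
  | succ t ih =>
    rw [Function.iterate_succ_apply']
    simp only [mutate, if_true, ih, Nat.cast_succ, add_comm (t : Fin (m + 1)), add_assoc]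

lemma iterate_mutate_apply_from_vertex (Q : V → V → Fin (m + 1) → ℕ) {v k : V} (hk : k ≠ v)
    (t : ℕ) (c : Fin (m + 1)) : ((fun A => mutate A v)^[t] Q) v k c = Q v k (c - t) := by
  induction t generalizing c with
  | zero => simp
  | succ t ih =>
    rw [Function.iterate_succ_apply']
    simp only [mutate, if_neg hk, if_true, ih, Nat.cast_succ,
      sub_add_eq_sub_sub_swap]

theorem iterate_mutate_eq_self_of_isSimpleCQ {M : V → V → Fin (m + 1) → ℕ}
    (hM : IsSimpleCQ M) (v : V) : (fun A => mutate A v)^[m + 1] M = M := by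
  funext i k
  by_cases hk : k = v
  · subst hk
    funext c
    rw [iterate_mutate_apply_to_vertex, Fin.natCast_self, add_zero]
  by_cases hi : i = v
  · subst hi
    funext c
    rw [iterate_mutate_apply_from_vertex _ hk, Fin.natCast_self, sub_zero]
  set N : ℕ → Fin (m + 1) → ℕ := fun t => ((fun A => mutate A v)^[t] M) i k
  have hstep (t : ℕ) : N (t + 1) = mutationStep (N t)
      (mutationCorrection (fun c => M i v (c + t)) (fun c => M v k (c - t))) := by
    simp only [N, Function.iterate_succ_apply', mutate_apply_of_ne _ hi hk]
    congr <;> funext c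
    exacts [iterate_mutate_apply_to_vertex M v i t c, iterate_mutate_apply_from_vertex M hk t c]
  change N (m + 1) = N 0
  rcases eq_zero_or_single_of_sum_le_one (hM i v) with hA | ⟨a, hA⟩
  · exact orbit_eq_of_corr_eq_zero hstep (Nat.zero_le _)
      (fun t _ _ => by rw [hA]; exact mutationCorrection_zero_left _)
      (exists_eq_single_of_sum_le_one (hM i k))
  rcases eq_zero_or_single_of_sum_le_one (hM v k) with hB | ⟨b, hB⟩
  · exact orbit_eq_of_corr_eq_zero hstep (Nat.zero_le _)
      (fun t _ _ => by rw [hB]; exact mutationCorrection_zero_right _)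
      (exists_eq_single_of_sum_le_one (hM i k))
  -- The arrow `i → v` reaches colour `m` at time `a + 1`, the arrow `v → k` colour `0` at `-b`.
  refine orbit_eq_of_corr_cancel hstep (hM i k) (p := a + b) (q := a + b + 1)
    (-b).is_lt (a + 1).is_lt fun t ht => ?_
  rw [hA, hB, mutationCorrection_shift_single]
  simp only [natCast_eq_iff_of_lt ht]

theorem mutate_iterate_eq_self_general (m : ℕ)
    (V : Type) [DecidableEq V]
    (M : V → V → Fin (m + 1) → ℕ) (hM : MemQClass M) (v : V) :
    (fun A => mutate A v)^[m + 1] M = M :=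
  iterate_mutate_eq_self_of_isSimpleCQ hM.2.1 v

/-- Coloured mutation restricted to the class `𝒬ₙᵐ` is invertible: mutating
`m + 1` times at any vertex returns the original quiver. -/
theorem mutate_iterate_eq_self (m : ℕ) (hm : 1 ≤ m)
    (V : Type) [Fintype V] [DecidableEq V]
    (M : V → V → Fin (m + 1) → ℕ) (hM : MemQClass M) (v : V) :
    (fun A => mutate A v)^[m + 1] M = M :=
  mutate_iterate_eq_self_general m V M hM v

end MutClassAn
end

section
/- Let K = {x_1, …, x_k} be a coloured k-clique with k ≥ 3 and let A = {m−1, 2m+1}. Then the weight of the Hamiltonian cycle x_1 → x_2 → … → x_k → x_1 belongs to the (k−2)-fold Minkowski sum (k−2)A translated by −(k−3)m; explicitly, the weight equals (k−2−i)(m−1) + i(2m+1) − (k−3)m = (m+2−k) + i(m+2) for some integer i with 0 ≤ i ≤ k−2. -/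
namespace MutClassAn

open Finset

variable {V : Type} [Fintype V] [DecidableEq V]

/-!
Fan-triangulate the cycle from its first vertex `x₁`: the `k - 2` triangles
`x₁, x_{i+1}, x_{i+2}` cover every edge of the cycle once, and each of the `k - 3` interior
chords twice, once in each direction. By skew-symmetry each chord contributes `m`, so the
weight of the cycle is the sum of `k - 2` triangle weights, each `m - 1` or `2m + 1`, minus
`(k - 3) m`.
-/

open Fin.NatCast

theorem exists_sum_range_eq_of_forall_eq_or_eq {f : ℕ → ℤ} {a b : ℤ} :
    ∀ {N : ℕ}, (∀ j < N, f j = a ∨ f j = b) →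
      ∃ i ≤ N, ∑ j ∈ range N, f j = ((N : ℤ) - i) * a + i * b
  | 0, _ => ⟨0, le_rfl, by simp⟩
  | N + 1, h => by
    obtain ⟨i, hiN, hsum⟩ :=
      exists_sum_range_eq_of_forall_eq_or_eq (N := N) fun j hj => h j (by omega)
    rw [sum_range_succ, hsum]
    rcases h N N.lt_succ_self with hN | hN
    · exact ⟨i, by omega, by rw [hN]; push_cast; ring⟩
    · exact ⟨i + 1, by omega, by rw [hN]; push_cast; ring⟩

theorem sum_fan_triangles {W : Type} (w : W → W → ℤ) (m : ℤ) (y : ℕ → W) :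
    ∀ (n : ℕ), (∀ j, 2 ≤ j → j ≤ n + 1 → w (y 0) (y j) + w (y j) (y 0) = m) →
      ∑ i ∈ range (n + 1),
          (w (y 0) (y (i + 1)) + w (y (i + 1)) (y (i + 2)) + w (y (i + 2)) (y 0))
        = ∑ i ∈ range (n + 2), w (y i) (y (i + 1)) + w (y (n + 2)) (y 0) + n * m
  | 0, _ => by simp [sum_range_succ]
  | n + 1, hskew => by
    have ih := sum_fan_triangles w m y n fun j hj₂ hj => hskew j hj₂ (by omega)
    have hchord := hskew (n + 2) le_add_self le_rfl
    rw [sum_range_succ, ih, sum_range_succ _ (n + 2)]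
    push_cast
    linarith

theorem cycleWeight_eq_sum_range {W : Type} (c : W → W → ℕ) {k : ℕ} [NeZero k]
    (x : Fin k → W) : cycleWeight c x = ∑ i ∈ range k, (c (x i) (x (i + 1 : ℕ)) : ℤ) := by
  rw [cycleWeight, ← Fin.sum_univ_eq_sum_range (fun i => (c (x i) (x (i + 1 : ℕ)) : ℤ))]
  refine sum_congr rfl fun i _ => ?_
  have hcyc : cyc i = ((i + 1 : ℕ) : Fin k) := Fin.ext (Fin.val_natCast _ _).symm
  rw [hcyc, Fin.cast_val_eq_self]

theorem cycleWeight_mem_minkowski_general (m k : ℕ) (hk : 3 ≤ k)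
    (W : Type)
    (c : W → W → ℕ) (hc : IsCliqueColouring m c)
    (x : Fin k → W) (hx : Function.Bijective x) :
    ∃ i : ℕ, i ≤ k - 2 ∧
      cycleWeight c x
        = ((k : ℤ) - 2 - i) * ((m : ℤ) - 1) + (i : ℤ) * (2 * (m : ℤ) + 1)
            - ((k : ℤ) - 3) * (m : ℤ) ∧
      cycleWeight c x = ((m : ℤ) + 2 - k) + (i : ℤ) * ((m : ℤ) + 2) := by
  obtain ⟨n, rfl⟩ : ∃ n, k = n + 3 := ⟨k - 3, by omega⟩
  set y : ℕ → W := fun i => x i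
  have hy : ∀ a b, a < n + 3 → b < n + 3 → a ≠ b → y a ≠ y b := fun a b ha hb hab hxy =>
    hab <| by simpa [Nat.mod_eq_of_lt ha, Nat.mod_eq_of_lt hb] using congrArg Fin.val (hx.1 hxy)
  obtain ⟨i, hi, htriangles⟩ := exists_sum_range_eq_of_forall_eq_or_eq (N := n + 1)
    fun j hj => hc.2.2 (y 0) (y (j + 1)) (y (j + 2))
      (hy _ _ (by omega) (by omega) (by omega)) (hy _ _ (by omega) (by omega) (by omega))
      (hy _ _ (by omega) (by omega) (by omega))
  have hfan := sum_fan_triangles (fun a b => (c a b : ℤ)) m y n fun j hj₂ hj => by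
    exact_mod_cast hc.2.1 _ _ (hy 0 j (by omega) (by omega) (by omega))
  have hcycle : cycleWeight c x
      = ∑ i ∈ range (n + 2), (c (y i) (y (i + 1)) : ℤ) + c (y (n + 2)) (y 0) := by
    rw [cycleWeight_eq_sum_range, sum_range_succ]
    simp [y]
  refine ⟨i, by omega, ?_, ?_⟩ <;> push_cast at * <;> linarith

/-- The weight of a Hamiltonian cycle in a coloured `k`-clique belongs to the
`(k-2)`-fold Minkowski sum of `{m-1, 2m+1}` translated by `-(k-3)m`: it equals
`(k-2-i)(m-1) + i(2m+1) - (k-3)m = (m+2-k) + i(m+2)` for some `0 ≤ i ≤ k-2`. -/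
theorem cycleWeight_mem_minkowski (m k : ℕ) (hm : 1 ≤ m) (hk : 3 ≤ k)
    (W : Type) [Fintype W] (hcard : Fintype.card W = k)
    (c : W → W → ℕ) (hc : IsCliqueColouring m c)
    (x : Fin k → W) (hx : Function.Bijective x) :
    ∃ i : ℕ, i ≤ k - 2 ∧
      cycleWeight c x
        = ((k : ℤ) - 2 - i) * ((m : ℤ) - 1) + (i : ℤ) * (2 * (m : ℤ) + 1)
            - ((k : ℤ) - 3) * (m : ℤ) ∧
      cycleWeight c x = ((m : ℤ) + 2 - k) + (i : ℤ) * ((m : ℤ) + 2) :=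
  cycleWeight_mem_minkowski_general m k hk W c hc x hx

end MutClassAn
end

section
/- Let K = {x_1, …, x_k} be a coloured k-clique with k ≥ 3. If the weight of the Hamiltonian cycle x_1 → x_2 → … → x_k → x_1 is strictly less than 2m + 4 − k, then this weight equals m + 2 − k. -/
namespace MutClassAn

open Finset

variable {V : Type} [Fintype V] [DecidableEq V]

/-! The colours shifted by one form, modulo `m + 2`, an alternating cocycle on the clique:
skew-symmetry gives `(c u v + 1) + (c v u + 1) = m + 2` and the triangle condition gives
`Σ (c + 1) ∈ {m + 2, 2(m + 2)}` on every triangle. Hence `c u v + 1 ≡ φ v - φ u` for a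
potential `φ`, the weight of any Hamiltonian `k`-cycle telescopes to `-k` modulo `m + 2`, and
the only value `≡ m + 2 - k` in the window `[0, 2m + 4 - k)` is `m + 2 - k` itself. -/

theorem exists_potential_of_cocycle {W G : Type*} [AddCommGroup G] (d : W → W → G)
    (hskew : ∀ u v, u ≠ v → d u v + d v u = 0)
    (hcocycle : ∀ u v w, u ≠ v → v ≠ w → u ≠ w → d u v + d v w + d w u = 0) :
    ∃ φ : W → G, ∀ u v, u ≠ v → d u v = φ v - φ u := by
  classical
  rcases isEmpty_or_nonempty W with _ | ⟨⟨w₀⟩⟩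
  · exact ⟨0, fun u => isEmptyElim u⟩
  refine ⟨fun v => if v = w₀ then 0 else d w₀ v, fun u v huv => ?_⟩
  by_cases hu : u = w₀
  · subst hu
    simp [huv.symm]
  by_cases hv : v = w₀
  · subst hv
    have := hskew u v huv
    simp only [hu, if_true, if_false, zero_sub]
    exact eq_neg_of_add_eq_zero_left this
  have h₁ := hcocycle w₀ u v (Ne.symm hu) huv (Ne.symm hv)
  have h₂ := hskew v w₀ hv
  simp only [hu, hv, if_false]
  calc d u v = (d w₀ u + d u v + d v w₀) - (d v w₀ + d w₀ v) + (d w₀ v - d w₀ u) := by abel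
    _ = d w₀ v - d w₀ u := by rw [h₁, h₂]; abel

theorem IsCliqueColouring.exists_potential {m : ℕ} {W : Type} {c : W → W → ℕ}
    (hc : IsCliqueColouring m c) :
    ∃ φ : W → ZMod (m + 2), ∀ u v, u ≠ v → (c u v : ZMod (m + 2)) = φ v - φ u - 1 := by
  obtain ⟨-, hskew, htri⟩ := hc
  have hzero : (m : ZMod (m + 2)) + 2 = 0 := by exact_mod_cast ZMod.natCast_self (m + 2)
  obtain ⟨φ, hφ⟩ := exists_potential_of_cocycle (fun u v => (c u v : ZMod (m + 2)) + 1)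
    (fun u v huv => by
      have := congrArg (fun n : ℕ => (n : ZMod (m + 2))) (hskew u v huv)
      push_cast at this
      linear_combination this + hzero)
    (fun u v w huv hvw huw => by
      rcases htri u v w huv hvw huw with h | h
      · have := congrArg (fun z : ℤ => (z : ZMod (m + 2))) h
        push_cast at this
        linear_combination this + hzero
      · have := congrArg (fun z : ℤ => (z : ZMod (m + 2))) h
        push_cast at this
        linear_combination this + 2 * hzero)
  exact ⟨φ, fun u v huv => eq_sub_of_add_eq (hφ u v huv)⟩

theorem cyc_eq_add_one {k : ℕ} [NeZero k] (i : Fin k) : cyc i = i + 1 := by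
  ext
  simp [cyc, Fin.val_add]

theorem cyc_ne_self {k : ℕ} (hk : 2 ≤ k) (i : Fin k) : cyc i ≠ i := by
  intro h
  have hv : (i.val + 1) % k = i.val := congrArg Fin.val h
  rcases Nat.lt_or_ge (i.val + 1) k with hlt | hge
  · rw [Nat.mod_eq_of_lt hlt] at hv
    omega
  · rw [show i.val + 1 = k by omega, Nat.mod_self] at hv
    omega

theorem sum_comp_cyc {M : Type*} [AddCommMonoid M] {k : ℕ} [NeZero k] (f : Fin k → M) :
    ∑ i, f (cyc i) = ∑ i, f i := by
  simp only [cyc_eq_add_one]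
  exact Equiv.sum_comp (Equiv.addRight 1) f

theorem IsCliqueColouring.cycleWeight_cast {m : ℕ} {W : Type} {c : W → W → ℕ}
    (hc : IsCliqueColouring m c) {k : ℕ} (hk : 2 ≤ k) {x : Fin k → W}
    (hx : Function.Injective x) :
    (cycleWeight c x : ZMod (m + 2)) = -k := by
  have : NeZero k := ⟨by omega⟩
  obtain ⟨φ, hφ⟩ := hc.exists_potential
  have hstep : ∀ i, (c (x i) (x (cyc i)) : ZMod (m + 2)) = φ (x (cyc i)) - φ (x i) - 1 :=
    fun i => hφ _ _ (hx.ne (cyc_ne_self hk i).symm)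
  simp only [cycleWeight, Int.cast_sum, Int.cast_natCast, hstep, Finset.sum_sub_distrib,
    sum_comp_cyc (fun i => φ (x i))]
  simp

theorem cycleWeight_eq_of_lt_general (m k : ℕ) (hk : 3 ≤ k)
    (W : Type)
    (c : W → W → ℕ) (hc : IsCliqueColouring m c)
    (x : Fin k → W) (hx : Function.Bijective x)
    (hlt : cycleWeight c x < 2 * (m : ℤ) + 4 - k) :
    cycleWeight c x = (m : ℤ) + 2 - k := by
  have hmod : ((cycleWeight c x - ((m : ℤ) + 2 - k) : ℤ) : ZMod (m + 2)) = 0 := by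
    have hzero := ZMod.natCast_self (m + 2)
    rw [Int.cast_sub, hc.cycleWeight_cast (by omega) hx.injective]
    push_cast at hzero ⊢
    linear_combination -hzero
  have hdvd : ((m : ℤ) + 2) ∣ cycleWeight c x - ((m : ℤ) + 2 - k) := by
    exact_mod_cast (ZMod.intCast_zmod_eq_zero_iff_dvd _ (m + 2)).mp hmod
  have hnonneg : 0 ≤ cycleWeight c x := Finset.sum_nonneg fun _ _ => Int.natCast_nonneg _
  have habs : |cycleWeight c x - ((m : ℤ) + 2 - k)| < (m : ℤ) + 2 := by
    rw [abs_lt]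
    constructor <;> linarith
  linarith [Int.eq_zero_of_abs_lt_dvd hdvd habs]

/-- If the weight of a Hamiltonian cycle of a coloured `k`-clique is strictly less
than `2m + 4 - k`, then it equals `m + 2 - k`. -/
theorem cycleWeight_eq_of_lt (m k : ℕ) (hm : 1 ≤ m) (hk : 3 ≤ k)
    (W : Type) [Fintype W] (hcard : Fintype.card W = k)
    (c : W → W → ℕ) (hc : IsCliqueColouring m c)
    (x : Fin k → W) (hx : Function.Bijective x)
    (hlt : cycleWeight c x < 2 * (m : ℤ) + 4 - k) :
    cycleWeight c x = (m : ℤ) + 2 - k :=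
  cycleWeight_eq_of_lt_general m k hk W c hc x hx hlt

end MutClassAn
end

section
/- Every coloured k-clique K with k ≥ 3 has energy δ(K) = m + 2 − k; that is, the minimum over all cyclic orderings x_1, …, x_k of the vertex set of the weight Σ_{i=1}^{k} c_{x_i x_{i+1}} (indices modulo k) equals m + 2 − k. -/
namespace MutClassAn

open Finset

variable {V : Type} [Fintype V] [DecidableEq V]

/-!
Fix a vertex `o` and put `g o = 0`, `g i = c o i + 1` otherwise. Applied to the triangle
`i → j → o`, the triangle condition says `c i j + 1 ≡ g j - g i (mod m + 2)`, and since
`1 ≤ c i j + 1 ≤ m + 1` the colour `c i j + 1` is `g j - g i` when `g` increases from `i` to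
`j`, and `g j - g i + (m + 2)` when it decreases. Around a Hamiltonian cycle the differences
telescope, so weight + `k` = `(m + 2)` · (number of descents of `g` along the cycle). The weight
is nonnegative, so every cycle descends at least once; listing the vertices in increasing
order of `g` gives a cycle with exactly one descent.
-/

theorem cyc_eq_finRotate (k : ℕ) : (cyc : Fin k → Fin k) = finRotate k := by
  cases k with
  | zero => exact funext fun i => i.elim0
  | succ n =>
    funext i
    ext
    rw [coe_finRotate]
    split_ifs with h
    · simp [cyc, h]
    · have : i.val + 1 < n + 1 := by
        have := Fin.val_lt_last h
        omega
      simp [cyc, Nat.mod_eq_of_lt this]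

theorem card_filter_cyc_lt_of_strictMono {α : Type} [LinearOrder α] {k : ℕ} {f : Fin k → α}
    (hf : StrictMono f) (hk : 2 ≤ k) : #{i | f (cyc i) < f i} = 1 := by
  rw [Finset.card_eq_one]
  refine ⟨⟨k - 1, by omega⟩, ?_⟩
  ext i
  simp only [hf.lt_iff_lt, Finset.mem_filter, Finset.mem_univ, true_and,
    Finset.mem_singleton, Fin.lt_def, Fin.ext_iff, cyc]
  rcases Nat.lt_or_ge (i.val + 1) k with hlt | hge
  · rw [Nat.mod_eq_of_lt hlt]
    omega
  · rw [show i.val + 1 = k by omega, Nat.mod_self]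
    omega

theorem exists_bijective_strictMono_comp {W α : Type} [Fintype W] [LinearOrder α] {g : W → α}
    (hg : Function.Injective g) {k : ℕ} (hcard : Fintype.card W = k) :
    ∃ x : Fin k → W, Function.Bijective x ∧ StrictMono (g ∘ x) := by
  let _ : LinearOrder W := LinearOrder.lift' g hg
  let e := monoEquivOfFin W hcard
  exact ⟨e, e.bijective, fun _ _ h => e.strictMono h⟩

theorem cycleWeight_nonneg {W : Type} (c : W → W → ℕ) {k : ℕ} (x : Fin k → W) :
    0 ≤ cycleWeight c x :=
  Finset.sum_nonneg fun _ _ => Int.natCast_nonneg _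

def IsColourPotential (m : ℕ) {W : Type} (c : W → W → ℕ) (g : W → ℕ) : Prop :=
  ∀ i j : W, i ≠ j →
    (c i j : ℤ) + 1 = (g j : ℤ) - g i + if g j < g i then (m : ℤ) + 2 else 0

section Potential

variable {m : ℕ} {W : Type} {c : W → W → ℕ} {g : W → ℕ} {k : ℕ}

theorem IsCliqueColouring.isColourPotential [DecidableEq W] (hc : IsCliqueColouring m c)
    (o : W) : IsColourPotential m c (fun i => if i = o then 0 else c o i + 1) := by
  obtain ⟨hle, hskew, htri⟩ := hc
  intro i j hij
  by_cases hio : i = o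
  · subst hio
    simp [hij.symm]
  by_cases hjo : j = o
  · subst hjo
    have := hskew i j hij
    simp only [hio, if_true, if_false]
    push_cast
    split_ifs <;> omega
  have := hskew j o hjo
  have := hle i j hij
  simp only [hio, hjo, if_false]
  push_cast
  rcases htri i j o hij hjo hio with h | h <;> split_ifs <;> omega

theorem IsColourPotential.injective (hg : IsColourPotential m c g) : Function.Injective g := by
  intro i j hgij
  by_contra hij
  have := hg i j hij
  simp only [hgij, lt_irrefl, if_false] at this
  omega

theorem IsColourPotential.cycleWeight_add_card (hg : IsColourPotential m c g) (hk : 2 ≤ k)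
    {x : Fin k → W} (hx : Function.Injective x) :
    cycleWeight c x + k = #{i | g (x (cyc i)) < g (x i)} * ((m : ℤ) + 2) := by
  have htelescope : ∑ i : Fin k, ((g (x (cyc i)) : ℤ) - g (x i)) = 0 := by
    rw [Finset.sum_sub_distrib, cyc_eq_finRotate,
      Equiv.sum_comp (finRotate k) (fun i => (g (x i) : ℤ)), sub_self]
  calc cycleWeight c x + k
      = ∑ i : Fin k, ((c (x i) (x (cyc i)) : ℤ) + 1) := by
        simp [cycleWeight, Finset.sum_add_distrib]
    _ = ∑ i : Fin k, (((g (x (cyc i)) : ℤ) - g (x i)) +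
          if g (x (cyc i)) < g (x i) then (m : ℤ) + 2 else 0) :=
        Finset.sum_congr rfl fun i _ => hg _ _ fun h => cyc_ne_self hk i (hx h).symm
    _ = #{i | g (x (cyc i)) < g (x i)} * ((m : ℤ) + 2) := by
        rw [Finset.sum_add_distrib, htelescope, zero_add, Finset.sum_ite, Finset.sum_const,
          Finset.sum_const_zero, add_zero, nsmul_eq_mul]

theorem IsColourPotential.le_cycleWeight (hg : IsColourPotential m c g) (hk : 2 ≤ k)
    {x : Fin k → W} (hx : Function.Injective x) : (m : ℤ) + 2 - k ≤ cycleWeight c x := by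
  have hweight := hg.cycleWeight_add_card hk hx
  have hdescent : 0 < #{i | g (x (cyc i)) < g (x i)} := by
    by_contra! h
    rw [Nat.le_zero.mp h, Nat.cast_zero, zero_mul] at hweight
    linarith [cycleWeight_nonneg c x]
  have : (1 : ℤ) ≤ #{i | g (x (cyc i)) < g (x i)} := by exact_mod_cast hdescent
  nlinarith

theorem IsColourPotential.cycleWeight_eq_of_strictMono (hg : IsColourPotential m c g)
    (hk : 2 ≤ k) {x : Fin k → W} (hx : Function.Injective x) (hmono : StrictMono (g ∘ x)) :
    cycleWeight c x = (m : ℤ) + 2 - k := by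
  have hweight := hg.cycleWeight_add_card hk hx
  rw [show #{i | g (x (cyc i)) < g (x i)} = 1 from
    card_filter_cyc_lt_of_strictMono hmono hk, Nat.cast_one, one_mul] at hweight
  linarith

end Potential

theorem energy_clique_general (m k : ℕ) (hk : 3 ≤ k)
    (W : Type) [Fintype W] (hcard : Fintype.card W = k)
    (c : W → W → ℕ) (hc : IsCliqueColouring m c) :
    (∃ x : Fin k → W, Function.Bijective x ∧
        cycleWeight c x = (m : ℤ) + 2 - k) ∧
    (∀ x : Fin k → W, Function.Bijective x →
        (m : ℤ) + 2 - k ≤ cycleWeight c x) := by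
  classical
  obtain ⟨o⟩ : Nonempty W := Fintype.card_pos_iff.mp (by omega)
  have hg := hc.isColourPotential o
  obtain ⟨x, hx, hmono⟩ := exists_bijective_strictMono_comp hg.injective hcard
  exact ⟨⟨x, hx, hg.cycleWeight_eq_of_strictMono (by omega) hx.injective hmono⟩,
    fun y hy => hg.le_cycleWeight (by omega) hy.injective⟩

/-- Every coloured `k`-clique (`k ≥ 3`) has energy `m + 2 - k`: some Hamiltonian
cycle has weight `m + 2 - k`, and every Hamiltonian cycle has weight at least
`m + 2 - k`. -/
theorem energy_clique (m k : ℕ) (hm : 1 ≤ m) (hk : 3 ≤ k)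
    (W : Type) [Fintype W] (hcard : Fintype.card W = k)
    (c : W → W → ℕ) (hc : IsCliqueColouring m c) :
    (∃ x : Fin k → W, Function.Bijective x ∧
        cycleWeight c x = (m : ℤ) + 2 - k) ∧
    (∀ x : Fin k → W, Function.Bijective x →
        (m : ℤ) + 2 - k ≤ cycleWeight c x) :=
  energy_clique_general m k hk W hcard c hc

end MutClassAn
end

section
/- Every coloured k-clique satisfies k ≤ m + 2. Consequently, if Q is an m-coloured quiver in the class Q_n^m, then every clique of Q has at most m + 2 vertices, i.e. the clique number satisfies ω(Q) ≤ m + 2; moreover this bound is attained by some quiver in the class. -/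
/-!
Fix a vertex `i` of a coloured clique. If two other vertices `j ≠ l` had `c i j = c i l`, the
triangle `i, j, l` would have weight `c i j + c j l + (m - c i j) = c j l + m`, forcing
`c j l ∈ {-1, m + 1}`. So `j ↦ c i j` is injective on the remaining `k - 1` vertices, with values
in `{0, …, m}`, and `k ≤ m + 2`. The colours of a clique in a quiver of `𝒬ₙᵐ` form such a
colouring. Conversely the colouring `c a b = (b - a - 1) mod (m + 2)` of `Fin (m + 2)`, whose
triangle weights are `≡ -3 (mod m + 2)`, defines a complete quiver lying in `𝒬ₙᵐ`.
-/
namespace MutClassAn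

open Finset

variable {V : Type} [Fintype V] [DecidableEq V]

section CliqueColouring

variable {m : ℕ} {W : Type} {c : W → W → ℕ}

theorem IsCliqueColouring.injOn (hc : IsCliqueColouring m c) (i : W) :
    Set.InjOn (c i) {j | j ≠ i} := by
  intro j hj l hl hjl
  by_contra hjl'
  have htri := hc.2.2 i j l (Ne.symm hj) hjl' (Ne.symm hl)
  have hskew := hc.2.1 i l (Ne.symm hl)
  have hle := hc.1 j l hjl'
  omega

theorem IsCliqueColouring.card_le [Fintype W] (hc : IsCliqueColouring m c) :
    Fintype.card W ≤ m + 2 := by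
  classical
  rcases isEmpty_or_nonempty W with hW | ⟨⟨i⟩⟩
  · simp
  have hmaps : Set.MapsTo (c i) ↑(univ.erase i) ↑(range (m + 1)) := fun j hj =>
    mem_range.2 (Nat.lt_succ_of_le (hc.1 i j (ne_of_mem_erase hj).symm))
  have hcard := card_le_card_of_injOn (c i) hmaps fun j hj l hl =>
    hc.injOn i (ne_of_mem_erase hj) (ne_of_mem_erase hl)
  rw [card_erase_of_mem (mem_univ i), card_univ, card_range] at hcard
  omega

end CliqueColouring

section ColouredQuiver

variable {m : ℕ} {U : Type} {M : U → U → Fin (m + 1) → ℕ} {i j : U}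

theorem colourOf_eq_of_forall_ne {d : Fin (m + 1)} (hd : M i j d = 1)
    (h : ∀ e ≠ d, M i j e = 0) : colourOf M i j = d := by
  rw [colourOf, sum_eq_single d (fun e _ he => by rw [h e he, zero_mul]) (by simp), hd, one_mul]

theorem exists_arrow_of_adj (hq : IsColouredQuiver M) (hs : IsSimpleCQ M) (h : CQAdj M i j) :
    ∃ d, M i j d = 1 ∧ ∀ e ≠ d, M i j e = 0 := by
  obtain ⟨-, d, hd⟩ := h
  have h0 : ∀ e ≠ d, M i j e = 0 := fun e he => by
    by_contra he'
    exact he (hq.2.1 i j e d he' hd)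
  have hsum := hs i j
  rw [sum_eq_single d (fun e _ he => h0 e he) (by simp)] at hsum
  exact ⟨d, by omega, h0⟩

theorem colourOf_add_colourOf (hq : IsColouredQuiver M) (hs : IsSimpleCQ M) (h : CQAdj M i j) :
    colourOf M i j + colourOf M j i = m := by
  obtain ⟨d, hd, h0⟩ := exists_arrow_of_adj hq hs h
  have hrev : colourOf M j i = d.rev := colourOf_eq_of_forall_ne
    (by rw [hq.2.2, Fin.rev_rev, hd])
    (fun e he => by rw [hq.2.2]; exact h0 e.rev (fun h => he (by rw [← h, Fin.rev_rev])))
  rw [colourOf_eq_of_forall_ne hd h0, hrev, Fin.val_rev]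
  omega

theorem IsCliqueCQ.isCliqueColouring (hq : IsColouredQuiver M) (hs : IsSimpleCQ M)
    (h2 : Cond2 M) {S : Set U} (hS : IsCliqueCQ M S) :
    IsCliqueColouring m (fun a b : S => colourOf M a b) := by
  have hadj : ∀ a b : S, a ≠ b → CQAdj M a b := fun a b hab =>
    hS a.2 b.2 (Subtype.coe_ne_coe.2 hab)
  refine ⟨fun a b hab => ?_, fun a b hab => colourOf_add_colourOf hq hs (hadj a b hab),
    fun a b d hab hbd had => ?_⟩
  · have := colourOf_add_colourOf hq hs (hadj a b hab)
    beta_reduce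
    omega
  · have hab' := colourOf_add_colourOf hq hs (hadj a b hab)
    have hbd' := colourOf_add_colourOf hq hs (hadj b d hbd)
    have had' := colourOf_add_colourOf hq hs (hadj a d had)
    have := h2 b a d (Subtype.coe_ne_coe.2 hab.symm) (Subtype.coe_ne_coe.2 had)
      (Subtype.coe_ne_coe.2 hbd) (hadj b a hab.symm) (hadj a d had) (hadj b d hbd)
    beta_reduce
    omega

theorem IsCliqueCQ.card_le (hM : MemQClass M) {S : Finset U} (hS : IsCliqueCQ M ↑S) :
    S.card ≤ m + 2 := by
  simpa using (hS.isCliqueColouring hM.1 hM.2.1 hM.2.2.2.2.2).card_le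

end ColouredQuiver

section CompleteQuiver

variable {m : ℕ} {U : Type}

theorem not_hasHole_of_forall_adj {M : U → U → Fin (m + 1) → ℕ}
    (hM : ∀ i j, i ≠ j → CQAdj M i j) : ¬ HasHole M := by
  rintro ⟨k, hk, x, hx, -, hnon⟩
  have hne : ∀ a b : ℕ, a < k → b < k → a ≠ b → (a : ZMod k) ≠ b := fun a b ha hb hab h =>
    hab (by rwa [ZMod.natCast_eq_natCast_iff' a b k, Nat.mod_eq_of_lt ha,
      Nat.mod_eq_of_lt hb] at h)
  have h02 : (0 : ZMod k) ≠ 2 := by exact_mod_cast hne 0 2 (by omega) (by omega) (by omega)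
  refine hnon 0 2 h02 ?_ ?_ (hM _ _ (hx.ne h02))
  · simpa using hne 2 1 (by omega) (by omega) (by omega)
  · exact_mod_cast hne 0 3 (by omega) (by omega) (by omega)

theorem cond1_of_adj_iff_ne [Fintype U] [DecidableEq U] {M : U → U → Fin (m + 1) → ℕ}
    (hM : ∀ i j, CQAdj M i j ↔ i ≠ j) (hcard : Fintype.card U ≤ m + 2) : Cond1 M := by
  intro v _
  have hnbrs : nbrs M v = ↑(univ.erase v) := by
    ext u
    simp [nbrs, hM, eq_comm]
  refine ⟨univ, {v}, mem_univ v, mem_singleton_self v, fun a _ b _ hab => (hM a b).2 hab,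
    fun a ha b hb hab => absurd ((mem_singleton.1 ha).trans (mem_singleton.1 hb).symm) hab,
    ?_, by simpa using hcard, by simp, fun u _ => Or.inl (mem_univ u),
    fun a _ _ b hb hbv => absurd (mem_singleton.1 hb) hbv⟩
  have : 0 < Fintype.card U := Fintype.card_pos_iff.2 ⟨v⟩
  rw [hnbrs, Set.ncard_coe_finset, card_erase_of_mem (mem_univ v), card_univ, card_singleton]
  omega

def completeQuiver [DecidableEq U] (m : ℕ) (c : U → U → ℕ) : U → U → Fin (m + 1) → ℕ :=
  fun i j d => if i ≠ j ∧ (d : ℕ) = c i j then 1 else 0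

variable [DecidableEq U] {c : U → U → ℕ}

theorem completeQuiver_adj_iff (hc : IsCliqueColouring m c) (i j : U) :
    CQAdj (completeQuiver m c) i j ↔ i ≠ j := by
  refine ⟨And.left, fun h => ⟨h, ⟨c i j, Nat.lt_succ_of_le (hc.1 i j h)⟩, ?_⟩⟩
  simp [completeQuiver, h]

theorem colourOf_completeQuiver (hc : IsCliqueColouring m c) {i j : U} (h : i ≠ j) :
    colourOf (completeQuiver m c) i j = c i j :=
  colourOf_eq_of_forall_ne (d := ⟨c i j, Nat.lt_succ_of_le (hc.1 i j h)⟩)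
    (by simp [completeQuiver, h])
    (fun e he => if_neg fun h' => he (Fin.ext h'.2))

theorem isColouredQuiver_completeQuiver (hc : IsCliqueColouring m c) :
    IsColouredQuiver (completeQuiver m c) := by
  refine ⟨fun i d => by simp [completeQuiver], fun i j d e hd he => ?_, fun i j d => ?_⟩
  · simp only [completeQuiver, ne_eq, ite_eq_right_iff, Classical.not_imp] at hd he
    exact Fin.ext (hd.1.2.trans he.1.2.symm)
  · by_cases hij : i = j
    · simp [completeQuiver, hij]
    have hskew := hc.2.1 i j hij
    have hd := d.is_lt
    simp only [completeQuiver, Fin.val_rev, ne_eq, hij, Ne.symm hij, not_false_eq_true, true_and]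
    split_ifs <;> omega

theorem isSimpleCQ_completeQuiver : IsSimpleCQ (completeQuiver m c) := by
  intro i j
  simp only [completeQuiver]
  rw [sum_boole, Nat.cast_id, card_le_one]
  simp only [mem_filter, mem_univ, true_and]
  exact fun d hd e he => Fin.ext (hd.2.trans he.2.symm)

theorem memQClass_completeQuiver [Fintype U] (hc : IsCliqueColouring m c) :
    MemQClass (completeQuiver m c) := by
  have hadj := completeQuiver_adj_iff hc
  refine ⟨isColouredQuiver_completeQuiver hc, isSimpleCQ_completeQuiver,
    fun u w => ?_, not_hasHole_of_forall_adj fun i j => (hadj i j).2,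
    cond1_of_adj_iff_ne hadj hc.card_le, fun a b d hab hbd had _ _ _ => ?_⟩
  · by_cases h : u = w
    · exact h ▸ Relation.ReflTransGen.refl
    · exact Relation.ReflTransGen.single ((hadj u w).2 h)
  · rw [colourOf_completeQuiver hc (Ne.symm hab), colourOf_completeQuiver hc had,
      colourOf_completeQuiver hc (Ne.symm hbd)]
    have := hc.2.2 b a d (Ne.symm hab) had hbd
    omega

end CompleteQuiver

def cyclicColouring (m : ℕ) (a b : Fin (m + 2)) : ℕ :=
  if a < b then b - a - 1 else m + 1 + b - a

theorem isCliqueColouring_cyclicColouring (m : ℕ) : IsCliqueColouring m (cyclicColouring m) := by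
  refine ⟨fun a b hab => ?_, fun a b hab => ?_, fun a b d hab hbd had => ?_⟩ <;>
    simp only [cyclicColouring, Fin.lt_def, ne_eq, Fin.ext_iff] at * <;>
    split_ifs <;> omega

theorem clique_number_bound_general (m : ℕ) :
    (∀ (W : Type) [Fintype W], ∀ c : W → W → ℕ,
        IsCliqueColouring m c → Fintype.card W ≤ m + 2) ∧
    (∀ (V : Type) [Fintype V] [DecidableEq V]
        (M : V → V → Fin (m + 1) → ℕ), MemQClass M →
        ∀ S : Finset V, IsCliqueCQ M ↑S → S.card ≤ m + 2) ∧
    (∃ (n : ℕ) (M : Fin n → Fin n → Fin (m + 1) → ℕ),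
        MemQClass M ∧ ∃ S : Finset (Fin n), IsCliqueCQ M ↑S ∧ S.card = m + 2) := by
  have hcyc := isCliqueColouring_cyclicColouring m
  refine ⟨fun W _ c hc => hc.card_le, fun V _ _ M hM S hS => hS.card_le hM,
    m + 2, completeQuiver m (cyclicColouring m), memQClass_completeQuiver hcyc, univ,
    fun a _ b _ hab => (completeQuiver_adj_iff hcyc a b).2 hab, by simp⟩

/-- Every coloured clique has at most `m + 2` vertices; consequently the clique
number of any quiver in the class `𝒬ₙᵐ` is at most `m + 2`, and this bound is
attained by some quiver in the class. -/
theorem clique_number_bound (m : ℕ) (hm : 1 ≤ m) :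
    (∀ (W : Type) [Fintype W], ∀ c : W → W → ℕ,
        IsCliqueColouring m c → Fintype.card W ≤ m + 2) ∧
    (∀ (V : Type) [Fintype V] [DecidableEq V]
        (M : V → V → Fin (m + 1) → ℕ), MemQClass M →
        ∀ S : Finset V, IsCliqueCQ M ↑S → S.card ≤ m + 2) ∧
    (∃ (n : ℕ) (M : Fin n → Fin n → Fin (m + 1) → ℕ),
        MemQClass M ∧ ∃ S : Finset (Fin n), IsCliqueCQ M ↑S ∧ S.card = m + 2) :=
  clique_number_bound_general m

end MutClassAn
end
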